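/- arXiv:2207.08550 — 10 statements merged into one kernel-verified Lean document; each statement's English description precedes it below -/
import Mathlib

section
/- Let m be a positive integer and m₁, …, m_m, C real numbers with 0 ≤ m_i ≤ C for all i, and set A = (1/m)·∑_{i=1}^m m_i and V = (1/m)·∑_{i=1}^m m_i². Assume C > A. Then C² > V, and the function f(r) = (C² − V) / ( (C − A)² + 2·r·(C − A) ) is strictly decreasing on r ∈ [0, ∞): for all 0 ≤ r < r' one has f(r') < f(r). -/
theorem stmt_2 (m : ℕ) (hm : 0 < m) (mi : Fin m → ℝ) (C : ℝ)
    (hmi : ∀ i, 0 ≤ mi i ∧ mi i ≤ C)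
    (A V : ℝ) (hA : A = (1 / (m : ℝ)) * ∑ i, mi i)
    (hV : V = (1 / (m : ℝ)) * ∑ i, (mi i) ^ 2)
    (hCA : A < C) :
    V < C ^ 2 ∧
    (∀ r r' : ℝ, 0 ≤ r → r < r' →
      (C ^ 2 - V) / ((C - A) ^ 2 + 2 * r' * (C - A))
        < (C ^ 2 - V) / ((C - A) ^ 2 + 2 * r * (C - A))) := by
  have hmpos : (0:ℝ) < m := by exact_mod_cast hm
  have hVle : V ≤ C * A := by
    rw [hV, hA]
    have : ∀ i ∈ Finset.univ, (mi i) ^ 2 ≤ C * mi i := by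
      intro i _
      have h := hmi i
      nlinarith [h.1, h.2]
    have hs := Finset.sum_le_sum this
    have h1 : (0:ℝ) ≤ 1 / (m:ℝ) := by positivity
    calc 1 / (m:ℝ) * ∑ i, (mi i)^2 ≤ 1 / (m:ℝ) * ∑ i, C * mi i :=
          mul_le_mul_of_nonneg_left hs h1
      _ = 1 / (m:ℝ) * (C * ∑ i, mi i) := by rw [Finset.mul_sum, Finset.mul_sum, Finset.mul_sum]
      _ = C * (1 / (m:ℝ) * ∑ i, mi i) := by ring
  have h0A : 0 ≤ A := by
    rw [hA]
    have : (0:ℝ) ≤ ∑ i, mi i := Finset.sum_nonneg fun i _ => (hmi i).1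
    positivity
  have hVC : V < C ^ 2 := by nlinarith
  refine ⟨hVC, ?_⟩
  intro r r' hr hrr
  have hCA' : 0 < C - A := by linarith
  have hnum : 0 < C ^ 2 - V := by linarith
  have hd1 : 0 < (C - A) ^ 2 + 2 * r * (C - A) := by nlinarith
  have hd2 : (C - A) ^ 2 + 2 * r * (C - A) < (C - A) ^ 2 + 2 * r' * (C - A) := by
    nlinarith
  exact div_lt_div_of_pos_left hnum hd1 hd2
end

section
/- Let R > 1, m₁ and α be real numbers with α ≥ 1. Define u = √(R−1), r = (m₁/(2R))·(1 + α − (α−1)·u) and p = α·m₁ − r. Then 2R − 1 + u > 0 and r = ( (1−u)/(2R − 1 + u) )·p + ( m₁·(1+u)/(2R − 1 + u) ). -/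
theorem stmt_6 (R m₁ α : ℝ) (hR : 1 < R) (hα : 1 ≤ α)
    (u r p : ℝ)
    (hu : u = Real.sqrt (R - 1))
    (hr : r = (m₁ / (2 * R)) * (1 + α - (α - 1) * u))
    (hp : p = α * m₁ - r) :
    0 < 2 * R - 1 + u ∧
    r = ((1 - u) / (2 * R - 1 + u)) * p + m₁ * (1 + u) / (2 * R - 1 + u) := by
  have hu0 : 0 ≤ u := hu ▸ Real.sqrt_nonneg _
  have hu2 : u ^ 2 = R - 1 := by
    rw [hu, sq, Real.mul_self_sqrt (by linarith)]
  have hpos : 0 < 2 * R - 1 + u := by linarith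
  refine ⟨hpos, ?_⟩
  have hR0 : (2 * R) ≠ 0 := by positivity
  rw [hp, hr]
  field_simp
  ring_nf
end

section
/- There is at most one triple of real numbers (R, t₁, t₂) with 1 < R < 2 and 0 < t₁ < t₂ < 1 satisfying (i) R·t₁ = t₁ + (1 − √(R−1))/2, (ii) R·t₂ = (2 + t₁ + t₂)/2 − √(R−1)·(t₂ − t₁)/2, and (iii) R = 1 + (t₁ + t₂)/2. -/
set_option maxHeartbeats 1600000 in
lemma stmt_9_aux (R t₁ t₂ : ℝ)
    (hR : 1 < R) (hR2 : R < 2) (h0 : 0 < t₁) (h12 : t₁ < t₂) (h21 : t₂ < 1)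
    (e1 : R * t₁ = t₁ + (1 - Real.sqrt (R - 1)) / 2)
    (e2 : R * t₂ = (2 + t₁ + t₂) / 2 - Real.sqrt (R - 1) * (t₂ - t₁) / 2)
    (e3 : R = 1 + (t₁ + t₂) / 2) :
    1/2 < Real.sqrt (R - 1) ∧ Real.sqrt (R - 1) < 1 ∧
    R = 1 + (Real.sqrt (R - 1))^2 ∧
    2*(Real.sqrt (R - 1))^2*t₁ = 1 - Real.sqrt (R - 1) ∧
    t₁ + t₂ = 2*(Real.sqrt (R - 1))^2 ∧
    4*(Real.sqrt (R - 1))^6 + 2*(Real.sqrt (R - 1))^5 + 2*(Real.sqrt (R - 1))^4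
      + (Real.sqrt (R - 1))^3 - 2*(Real.sqrt (R - 1))^2 - 1 = 0 := by
  set s := Real.sqrt (R - 1) with hs
  have hs0 : 0 ≤ s := Real.sqrt_nonneg _
  have hs2 : s^2 = R - 1 := Real.sq_sqrt (by linarith)
  have hRs : R = 1 + s^2 := by linarith
  have hslt : s < 1 := by
    nlinarith [hs2]
  have hspos : 0 < s := by
    rcases eq_or_lt_of_le hs0 with h | h
    · exfalso; nlinarith [hs2, h.symm]
    · exact h
  have key1 : 2*s^2*t₁ = 1 - s := by
    have : (R - 1) * t₁ = (1 - s)/2 := by linarith [e1]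
    nlinarith [this, hs2]
  have hsum : t₁ + t₂ = 2*s^2 := by linarith [e3, hs2]
  have eqB : 2*s^2*t₂ = 2 + t₁ - t₂ + s*t₁ - s*t₂ := by
    have : (1 + s^2) * t₂ = (2 + t₁ + t₂) / 2 - s * (t₂ - t₁) / 2 := by
      rw [← hRs]; exact e2
    linarith [this]
  have ht₂ : t₂ = 2*s^2 - t₁ := by linarith
  have key2 : 4*s^6 + 2*s^5 + 2*s^4 + s^3 - 2*s^2 - 1 = 0 := by
    have eqB' : 2*s^2*(2*s^2 - t₁) = 2 + t₁ - (2*s^2 - t₁) + s*t₁ - s*(2*s^2 - t₁) := by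
      rw [← ht₂]; exact eqB
    linear_combination s^2 * eqB' + (1 + s + s^2) * key1
  have key3 : 2*s^4 + s > 1 := by
    have ht : t₁ < s^2 := by linarith
    nlinarith [key1, ht, hspos]
  have hhalf : 1/2 < s := by nlinarith [key3, hslt, hspos]
  exact ⟨hhalf, hslt, hRs, key1, hsum, key2⟩


set_option maxHeartbeats 1600000 in
lemma stmt_9_qpos (s s' : ℝ) (h1 : 1/2 < s) (h1' : 1/2 < s') :
    0 < 4*(s^5 + s^4*s' + s^3*s'^2 + s^2*s'^3 + s*s'^4 + s'^5)
      + 2*(s^4 + s^3*s' + s^2*s'^2 + s*s'^3 + s'^4)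
      + 2*(s^3 + s^2*s' + s*s'^2 + s'^3)
      + (s^2 + s*s' + s'^2) - 2*(s + s') := by
  have hs : (0:ℝ) < s := by linarith
  have hs' : (0:ℝ) < s' := by linarith
  -- constant lower bounds on monomials
  have k11 : 1/4 ≤ s*s' := by nlinarith
  have k20 : 1/4 ≤ s^2 := by nlinarith
  have k02 : 1/4 ≤ s'^2 := by nlinarith
  have k30 : 1/8 ≤ s^3 := by nlinarith [mul_nonneg hs.le (by linarith : (0:ℝ) ≤ s^2 - 1/4)]
  have k03 : 1/8 ≤ s'^3 := by nlinarith [mul_nonneg hs'.le (by linarith : (0:ℝ) ≤ s'^2 - 1/4)]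
  have k21 : 1/8 ≤ s^2*s' := by nlinarith [mul_nonneg hs'.le (by linarith : (0:ℝ) ≤ s^2 - 1/4)]
  have k12 : 1/8 ≤ s*s'^2 := by nlinarith [mul_nonneg hs.le (by linarith : (0:ℝ) ≤ s'^2 - 1/4)]
  have k22 : 1/16 ≤ s^2*s'^2 := by nlinarith [mul_nonneg (by linarith : (0:ℝ) ≤ s^2 - 1/4) (by linarith : (0:ℝ) ≤ s'^2 - 1/4)]
  have k31 : 1/16 ≤ s^3*s' := by nlinarith [mul_nonneg hs'.le (by linarith : (0:ℝ) ≤ s^3 - 1/8)]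
  have k13 : 1/16 ≤ s*s'^3 := by nlinarith [mul_nonneg hs.le (by linarith : (0:ℝ) ≤ s'^3 - 1/8)]
  have k40 : 1/16 ≤ s^4 := by nlinarith [mul_nonneg hs.le (by linarith : (0:ℝ) ≤ s^3 - 1/8)]
  have k04 : 1/16 ≤ s'^4 := by nlinarith [mul_nonneg hs'.le (by linarith : (0:ℝ) ≤ s'^3 - 1/8)]
  -- linear-in-(s,s') lower bounds
  have a3 : s/4 ≤ s^3 := by nlinarith [mul_nonneg hs.le (by linarith : (0:ℝ) ≤ s^2 - 1/4)]
  have a4 : s'/4 ≤ s'^3 := by nlinarith [mul_nonneg hs'.le (by linarith : (0:ℝ) ≤ s'^2 - 1/4)]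
  have a5 : s/4 ≤ s^2*s' := by nlinarith [mul_nonneg hs.le (by linarith : (0:ℝ) ≤ s*s' - 1/4)]
  have a6 : s'/4 ≤ s*s'^2 := by nlinarith [mul_nonneg hs'.le (by linarith : (0:ℝ) ≤ s*s' - 1/4)]
  have a7 : (s+s')/4 ≤ s*s' := by nlinarith [mul_pos (by linarith : (0:ℝ) < 2*s - 1) (by linarith : (0:ℝ) < 2*s' - 1)]
  have a1 : s/2 ≤ s^2 := by nlinarith
  have a2 : s'/2 ≤ s'^2 := by nlinarith
  have b1 : s/8 ≤ s^4 := by nlinarith [mul_nonneg hs.le (by linarith : (0:ℝ) ≤ s^3 - 1/8)]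
  have b2 : s'/8 ≤ s'^4 := by nlinarith [mul_nonneg hs'.le (by linarith : (0:ℝ) ≤ s'^3 - 1/8)]
  have b3 : s/8 ≤ s^3*s' := by nlinarith [mul_nonneg hs.le (by linarith : (0:ℝ) ≤ s^2*s' - 1/8)]
  have b4 : s'/8 ≤ s*s'^3 := by nlinarith [mul_nonneg hs'.le (by linarith : (0:ℝ) ≤ s*s'^2 - 1/8)]
  have b5 : (0:ℝ) ≤ s^2*s'^2 := by positivity
  have c1 : s/16 ≤ s^5 := by nlinarith [mul_nonneg hs.le (by linarith : (0:ℝ) ≤ s^4 - 1/16)]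
  have c2 : s'/16 ≤ s'^5 := by nlinarith [mul_nonneg hs'.le (by linarith : (0:ℝ) ≤ s'^4 - 1/16)]
  have c3 : s/16 ≤ s^4*s' := by nlinarith [mul_nonneg hs.le (by linarith : (0:ℝ) ≤ s^3*s' - 1/16)]
  have c4 : s'/16 ≤ s*s'^4 := by nlinarith [mul_nonneg hs'.le (by linarith : (0:ℝ) ≤ s*s'^3 - 1/16)]
  have c5 : s/16 ≤ s^3*s'^2 := by nlinarith [mul_nonneg hs.le (by linarith : (0:ℝ) ≤ s^2*s'^2 - 1/16)]
  have c6 : s'/16 ≤ s^2*s'^3 := by nlinarith [mul_nonneg hs'.le (by linarith : (0:ℝ) ≤ s^2*s'^2 - 1/16)]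
  linarith

set_option maxHeartbeats 1600000 in
theorem stmt_9 (R t₁ t₂ R' t₁' t₂' : ℝ)
    (hR : 1 < R) (hR2 : R < 2) (h0 : 0 < t₁) (h12 : t₁ < t₂) (h21 : t₂ < 1)
    (e1 : R * t₁ = t₁ + (1 - Real.sqrt (R - 1)) / 2)
    (e2 : R * t₂ = (2 + t₁ + t₂) / 2 - Real.sqrt (R - 1) * (t₂ - t₁) / 2)
    (e3 : R = 1 + (t₁ + t₂) / 2)
    (hR' : 1 < R') (hR2' : R' < 2) (h0' : 0 < t₁') (h12' : t₁' < t₂') (h21' : t₂' < 1)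
    (e1' : R' * t₁' = t₁' + (1 - Real.sqrt (R' - 1)) / 2)
    (e2' : R' * t₂' = (2 + t₁' + t₂') / 2 - Real.sqrt (R' - 1) * (t₂' - t₁') / 2)
    (e3' : R' = 1 + (t₁' + t₂') / 2) :
    R = R' ∧ t₁ = t₁' ∧ t₂ = t₂' := by
  obtain ⟨h1, h2, h3, h4, h5, h6⟩ := stmt_9_aux R t₁ t₂ hR hR2 h0 h12 h21 e1 e2 e3
  obtain ⟨h1', h2', h3', h4', h5', h6'⟩ := stmt_9_aux R' t₁' t₂' hR' hR2' h0' h12' h21' e1' e2' e3'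
  set s := Real.sqrt (R - 1)
  set s' := Real.sqrt (R' - 1)
  have hss : s = s' := by
    by_contra hne
    have hq := stmt_9_qpos s s' h1 h1'
    have hfact : (s - s') * (4*(s^5 + s^4*s' + s^3*s'^2 + s^2*s'^3 + s*s'^4 + s'^5)
      + 2*(s^4 + s^3*s' + s^2*s'^2 + s*s'^3 + s'^4)
      + 2*(s^3 + s^2*s' + s*s'^2 + s'^3)
      + (s^2 + s*s' + s'^2) - 2*(s + s')) = 0 := by linear_combination h6 - h6'
    rcases mul_eq_zero.mp hfact with h | h
    · exact hne (by linarith [sub_eq_zero.mp h])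
    · linarith
  have hRR : R = R' := by rw [h3, h3', hss]
  have ht1 : t₁ = t₁' := by
    have hs2pos : (0:ℝ) < 2*s^2 := by nlinarith [h1]
    have : 2*s^2*t₁ = 2*s^2*t₁' := by rw [h4, hss, h4']
    exact mul_left_cancel₀ (ne_of_gt hs2pos) this
  have ht2 : t₂ = t₂' := by
    have := h5; have := h5'
    rw [hss] at h5
    linarith
  exact ⟨hRR, ht1, ht2⟩
end

section
/- Let R, t₁, t₂ be real numbers satisfying the two-machine delay system together with its numeric localization 1.5460 < R < 1.5462, 0.2389 < t₁ < 0.2390, 0.8532 < t₂ < 0.8533. Define u = √(R−1), a = (1−u)/(2R−1+u) and b = (1+u)/(2R−1+u). Then a + b·(1 + t₂) < 1 + t₁ and a + b·(2 + t₁) < 1 + t₂. -/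
theorem stmt_11 (R t₁ t₂ : ℝ)
    (hR : 1 < R) (hR2 : R < 2) (h0 : 0 < t₁) (h12 : t₁ < t₂) (h21 : t₂ < 1)
    (e1 : R * t₁ = t₁ + (1 - Real.sqrt (R - 1)) / 2)
    (e2 : R * t₂ = (2 + t₁ + t₂) / 2 - Real.sqrt (R - 1) * (t₂ - t₁) / 2)
    (e3 : R = 1 + (t₁ + t₂) / 2)
    (nR1 : 1.5460 < R) (nR2 : R < 1.5462)
    (n11 : 0.2389 < t₁) (n12 : t₁ < 0.2390)
    (n21 : 0.8532 < t₂) (n22 : t₂ < 0.8533)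
    (u a b : ℝ)
    (hu : u = Real.sqrt (R - 1))
    (ha : a = (1 - u) / (2 * R - 1 + u))
    (hb : b = (1 + u) / (2 * R - 1 + u)) :
    a + b * (1 + t₂) < 1 + t₁ ∧ a + b * (2 + t₁) < 1 + t₂ := by
  have hu0 : 0 ≤ u := hu ▸ Real.sqrt_nonneg _
  have husq : u ^ 2 = R - 1 := by
    rw [hu, sq, Real.mul_self_sqrt (by linarith)]
  have hul : 0.7389 < u := by
    nlinarith [sq_nonneg (u - 0.7389)]
  have huu : u < 0.7391 := by
    nlinarith [sq_nonneg (u - 0.7391)]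
  have hd : (0:ℝ) < 2 * R - 1 + u := by linarith
  constructor
  · have h : a + b * (1 + t₂) = ((1 - u) + (1 + u) * (1 + t₂)) / (2 * R - 1 + u) := by
      rw [ha, hb]; ring
    rw [h, div_lt_iff₀ hd]
    nlinarith [mul_pos (sub_pos.2 huu) (sub_pos.2 n22), mul_pos (sub_pos.2 nR1) (sub_pos.2 hul)]
  · have h : a + b * (2 + t₁) = ((1 - u) + (1 + u) * (2 + t₁)) / (2 * R - 1 + u) := by
      rw [ha, hb]; ring
    rw [h, div_lt_iff₀ hd]
    nlinarith [mul_pos (sub_pos.2 huu) (sub_pos.2 n12), mul_pos (sub_pos.2 nR1) (sub_pos.2 hul)]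
end

section
/- Let R, t₁, t₂ be real numbers satisfying the two-machine delay system together with its numeric localization 1.5460 < R < 1.5462, 0.2389 < t₁ < 0.2390, 0.8532 < t₂ < 0.8533. Define u = √(R−1), a = (1−u)/(2R−1+u) and b = (1+u)/(2R−1+u). Then a < t₁ and a + b·(1 + a) < t₂. -/
set_option maxHeartbeats 1000000


theorem stmt_12 (R t₁ t₂ : ℝ)
    (hR : 1 < R) (hR2 : R < 2) (h0 : 0 < t₁) (h12 : t₁ < t₂) (h21 : t₂ < 1)
    (e1 : R * t₁ = t₁ + (1 - Real.sqrt (R - 1)) / 2)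
    (e2 : R * t₂ = (2 + t₁ + t₂) / 2 - Real.sqrt (R - 1) * (t₂ - t₁) / 2)
    (e3 : R = 1 + (t₁ + t₂) / 2)
    (nR1 : 1.5460 < R) (nR2 : R < 1.5462)
    (n11 : 0.2389 < t₁) (n12 : t₁ < 0.2390)
    (n21 : 0.8532 < t₂) (n22 : t₂ < 0.8533)
    (u a b : ℝ)
    (hu : u = Real.sqrt (R - 1))
    (ha : a = (1 - u) / (2 * R - 1 + u))
    (hb : b = (1 + u) / (2 * R - 1 + u)) :
    a < t₁ ∧ a + b * (1 + a) < t₂ := by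
  have hR1 : (0:ℝ) < R - 1 := by linarith
  have hu0 : 0 ≤ u := hu ▸ Real.sqrt_nonneg _
  have hu2 : u ^ 2 = R - 1 := by rw [hu, sq]; exact Real.mul_self_sqrt hR1.le
  have hul : (0.7389 : ℝ) < u := by nlinarith
  have huu : u < (0.7391 : ℝ) := by nlinarith
  have hd : (0:ℝ) < 2 * R - 1 + u := by linarith
  constructor
  · rw [ha, div_lt_iff₀ hd]; nlinarith
  · have ha' : a * (2 * R - 1 + u) = 1 - u := by rw [ha]; field_simp
    have hb' : b * (2 * R - 1 + u) = 1 + u := by rw [hb]; field_simp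
    have ha0 : 0 < a := ha ▸ div_pos (by linarith) hd
    have hb0 : 0 < b := hb ▸ div_pos (by linarith) hd
    have k1 : a * 2.8309 < a * (2 * R - 1 + u) :=
      mul_lt_mul_of_pos_left (by linarith) ha0
    have k2 : b * 2.8309 < b * (2 * R - 1 + u) :=
      mul_lt_mul_of_pos_left (by linarith) hb0
    have ha1 : a < 0.0923 := by nlinarith
    have hb1 : b < 0.6145 := by nlinarith
    have k3 : a * b < 0.0923 * b := mul_lt_mul_of_pos_right ha1 hb0
    have k4 : a + b * (1 + a) = a + b + a * b := by ring
    rw [k4]; linarith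
end

section
/- Let R, t₁, t₂ be real numbers satisfying the two-machine delay system together with its numeric localization 1.5460 < R < 1.5462, 0.2389 < t₁ < 0.2390, 0.8532 < t₂ < 0.8533. Define u = √(R−1), c = (1+u)/(2R−1−u) and p = (1 − 1/R)·(1 + t₁). Then ((t₁+1) + (t₁ + c·p) + p) / (1 + t₁ + p) < R and ((t₁+1) + 2·(t₁ + c·p) + 3·p) / (1 + 2·t₁ + 3·p) < R. -/
/-!
The bounds on `R` give `√(R - 1) < 0.74`, hence `c < 1.3`, and together with those on `t₁`
they give `0 ≤ p < 0.44`. After clearing the positive denominators, both inequalities become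
linear in `t₁`, `p`, `c * p` once `R * t₁` and `R * p` are bounded below by `1.546 * t₁` and
`1.546 * p`, and they then hold with margins above `0.1`.
-/

open Real

/-- The coefficient `c` of the start-time formula, with `u = √(R - 1)`. -/
noncomputable def startCoeff (R u : ℝ) : ℝ := (1 + u) / (2 * R - 1 - u)

/-- The processing time `p` of a small job completing at the availability time `t₁ + 1`. -/
noncomputable def smallJobTime (R t₁ : ℝ) : ℝ := (1 - 1 / R) * (1 + t₁)

lemma sqrt_sub_one_lt {R : ℝ} (hR : R < 1.5476) : √(R - 1) < 0.74 :=
  (sqrt_lt' (by norm_num)).2 (by linarith)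

lemma startCoeff_lt {R u : ℝ} (hR : 1.5460 < R) (hu : u < 0.74) : startCoeff R u < 1.3 := by
  rw [startCoeff, div_lt_iff₀ (by linarith)]
  linarith

lemma smallJobTime_nonneg {R t₁ : ℝ} (hR : 1 ≤ R) (ht : 0 ≤ t₁) : 0 ≤ smallJobTime R t₁ := by
  have : 1 / R ≤ 1 := div_le_one_of_le₀ hR (by linarith)
  exact mul_nonneg (by linarith) (by linarith)

lemma smallJobTime_lt {R t₁ : ℝ} (hR₁ : 0 < R) (hR₂ : R < 1.5462) (ht₀ : 0 ≤ t₁)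
    (ht : t₁ < 0.2390) : smallJobTime R t₁ < 0.44 := by
  have hinv : 0.6467 < 1 / R := by rw [lt_div_iff₀ hR₁]; linarith
  calc smallJobTime R t₁ ≤ 0.3533 * (1 + t₁) := by
        unfold smallJobTime
        gcongr
        linarith
    _ < 0.44 := by linarith

theorem stmt_13_general (R t₁ : ℝ)
    (h0 : 0 < t₁)
    (nR1 : 1.5460 < R) (nR2 : R < 1.5462)
    (n12 : t₁ < 0.2390)
    (u c p : ℝ)
    (hu : u = Real.sqrt (R - 1))
    (hc : c = (1 + u) / (2 * R - 1 - u))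
    (hp : p = (1 - 1 / R) * (1 + t₁)) :
    ((t₁ + 1) + (t₁ + c * p) + p) / (1 + t₁ + p) < R ∧
    ((t₁ + 1) + 2 * (t₁ + c * p) + 3 * p) / (1 + 2 * t₁ + 3 * p) < R := by
  have hc' : c < 1.3 := hc ▸ startCoeff_lt nR1 (hu ▸ sqrt_sub_one_lt (by linarith))
  have hp0 : 0 ≤ p := hp ▸ smallJobTime_nonneg (by linarith) h0.le
  have hp' : p < 0.44 := hp ▸ smallJobTime_lt (by linarith) nR2 h0.le n12
  have hcp : c * p ≤ 1.3 * p := mul_le_mul_of_nonneg_right hc'.le hp0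
  have hRt : 1.5460 * t₁ ≤ R * t₁ := mul_le_mul_of_nonneg_right nR1.le h0.le
  have hRp : 1.5460 * p ≤ R * p := mul_le_mul_of_nonneg_right nR1.le hp0
  constructor
  · rw [div_lt_iff₀ (by linarith)]
    linarith
  · rw [div_lt_iff₀ (by linarith)]
    linarith

theorem stmt_13 (R t₁ t₂ : ℝ)
    (hR : 1 < R) (hR2 : R < 2) (h0 : 0 < t₁) (h12 : t₁ < t₂) (h21 : t₂ < 1)
    (e1 : R * t₁ = t₁ + (1 - Real.sqrt (R - 1)) / 2)
    (e2 : R * t₂ = (2 + t₁ + t₂) / 2 - Real.sqrt (R - 1) * (t₂ - t₁) / 2)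
    (e3 : R = 1 + (t₁ + t₂) / 2)
    (nR1 : 1.5460 < R) (nR2 : R < 1.5462)
    (n11 : 0.2389 < t₁) (n12 : t₁ < 0.2390)
    (n21 : 0.8532 < t₂) (n22 : t₂ < 0.8533)
    (u c p : ℝ)
    (hu : u = Real.sqrt (R - 1))
    (hc : c = (1 + u) / (2 * R - 1 - u))
    (hp : p = (1 - 1 / R) * (1 + t₁)) :
    ((t₁ + 1) + (t₁ + c * p) + p) / (1 + t₁ + p) < R ∧
    ((t₁ + 1) + 2 * (t₁ + c * p) + 3 * p) / (1 + 2 * t₁ + 3 * p) < R :=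
  stmt_13_general R t₁ h0 nR1 nR2 n12 u c p hu hc hp
end

section
/- Let R, t₁, t₂ be real numbers satisfying the two-machine delay system together with its numeric localization 1.5460 < R < 1.5462, 0.2389 < t₁ < 0.2390, 0.8532 < t₂ < 0.8533. Define p = (1 − 1/R)·(1 + t₁). Then (1 + t₁ + p) / (t₁ + 2·p) < R. -/
theorem stmt_14 (R t₁ t₂ : ℝ)
    (hR : 1 < R) (hR2 : R < 2) (h0 : 0 < t₁) (h12 : t₁ < t₂) (h21 : t₂ < 1)
    (e1 : R * t₁ = t₁ + (1 - Real.sqrt (R - 1)) / 2)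
    (e2 : R * t₂ = (2 + t₁ + t₂) / 2 - Real.sqrt (R - 1) * (t₂ - t₁) / 2)
    (e3 : R = 1 + (t₁ + t₂) / 2)
    (nR1 : 1.5460 < R) (nR2 : R < 1.5462)
    (n11 : 0.2389 < t₁) (n12 : t₁ < 0.2390)
    (n21 : 0.8532 < t₂) (n22 : t₂ < 0.8533)
    (p : ℝ) (hp : p = (1 - 1 / R) * (1 + t₁)) :
    (1 + t₁ + p) / (t₁ + 2 * p) < R := by
  have hR0 : (0:ℝ) < R := by linarith
  have hpR : p * R = (R - 1) * (1 + t₁) := by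
    rw [hp]; field_simp
  have hplb : 0.43 < p := by nlinarith
  have hden : 0 < t₁ + 2 * p := by linarith
  rw [div_lt_iff₀ hden]
  nlinarith [mul_pos hR0 hden]
end

section
/- Let R, t₁, t₂ be real numbers satisfying the two-machine delay system together with its numeric localization 1.5460 < R < 1.5462, 0.2389 < t₁ < 0.2390, 0.8532 < t₂ < 0.8533. Define u = √(R−1), a = (1−u)/(2R−1+u), b = (1+u)/(2R−1+u), c = (1+u)/(2R−1−u) and p = (1 − 1/R)·(1 + t₁). Then t₁ + 1 < a + b·(t₁+2), a + b·(t₁+2) − (t₁+1) < t₁, and (a + b·(t₁+2) − (t₁+1)) + c·p < t₂. -/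
set_option maxHeartbeats 1000000 in
theorem stmt_16 (R t₁ t₂ : ℝ)
    (hR : 1 < R) (hR2 : R < 2) (h0 : 0 < t₁) (h12 : t₁ < t₂) (h21 : t₂ < 1)
    (e1 : R * t₁ = t₁ + (1 - Real.sqrt (R - 1)) / 2)
    (e2 : R * t₂ = (2 + t₁ + t₂) / 2 - Real.sqrt (R - 1) * (t₂ - t₁) / 2)
    (e3 : R = 1 + (t₁ + t₂) / 2)
    (nR1 : 1.5460 < R) (nR2 : R < 1.5462)
    (n11 : 0.2389 < t₁) (n12 : t₁ < 0.2390)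
    (n21 : 0.8532 < t₂) (n22 : t₂ < 0.8533)
    (u a b c p : ℝ)
    (hu : u = Real.sqrt (R - 1))
    (ha : a = (1 - u) / (2 * R - 1 + u))
    (hb : b = (1 + u) / (2 * R - 1 + u))
    (hc : c = (1 + u) / (2 * R - 1 - u))
    (hp : p = (1 - 1 / R) * (1 + t₁)) :
    t₁ + 1 < a + b * (t₁ + 2) ∧
    a + b * (t₁ + 2) - (t₁ + 1) < t₁ ∧
    (a + b * (t₁ + 2) - (t₁ + 1)) + c * p < t₂ := by
  have hu0 : 0 ≤ u := by rw [hu]; exact Real.sqrt_nonneg _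
  have hu2 : u ^ 2 = R - 1 := by
    rw [hu, sq, Real.mul_self_sqrt (by linarith)]
  have hul : 0.7389 < u := by nlinarith
  have huu : u < 0.7391 := by nlinarith
  have hD1 : (0:ℝ) < 2 * R - 1 + u := by linarith
  have hD2 : (0:ℝ) < 2 * R - 1 - u := by linarith
  have hab : a + b * (t₁ + 2) = (1 - u + (1 + u) * (t₁ + 2)) / (2 * R - 1 + u) := by
    rw [ha, hb]; field_simp
  have hinv : (0.64674 : ℝ) < 1 / R := by
    rw [lt_div_iff₀ (by linarith : (0:ℝ) < R)]; nlinarith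
  have hpu : p < 0.4377 := by
    rw [hp]
    have h1 : 1 - 1 / R < 0.35326 := by linarith
    calc (1 - 1 / R) * (1 + t₁) < 0.35326 * 1.2390 :=
          mul_lt_mul h1 (by linarith) (by linarith) (by norm_num)
      _ < 0.4377 := by norm_num
  have hp0 : 0 < p := by
    rw [hp]
    have : 0 < 1 - 1 / R := by
      rw [sub_pos, div_lt_one (by linarith)]; linarith
    positivity
  have hc0 : 0 < c := by rw [hc]; positivity
  have hcu : c < 1.29 := by
    rw [hc, div_lt_iff₀ hD2]; nlinarith
  have hcp : c * p < 1.29 * 0.4377 :=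
    mul_lt_mul hcu hpu.le hp0 (by norm_num)
  refine ⟨?_, ?_, ?_⟩
  · rw [hab, lt_div_iff₀ hD1]; nlinarith
  · rw [hab, sub_lt_iff_lt_add, div_lt_iff₀ hD1]; nlinarith
  · have h3 : a + b * (t₁ + 2) < 1.468 := by
      rw [hab, div_lt_iff₀ hD1]; nlinarith
    nlinarith
end

section
/- Let R, t₁, t₂ be real numbers satisfying the two-machine delay system together with its numeric localization 1.5460 < R < 1.5462, 0.2389 < t₁ < 0.2390, 0.8532 < t₂ < 0.8533. Define u = √(R−1), a = (1−u)/(2R−1+u), b = (1+u)/(2R−1+u) and p = (1 − 1/R)·(1 + t₁). Then ( 3·t₁ + 5 + a + b·(t₁+2) ) / ( 2·t₁ + 4 + 2·p ) < R. -/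
set_option maxHeartbeats 1000000 in
theorem stmt_17 (R t₁ t₂ : ℝ)
    (hR : 1 < R) (hR2 : R < 2) (h0 : 0 < t₁) (h12 : t₁ < t₂) (h21 : t₂ < 1)
    (e1 : R * t₁ = t₁ + (1 - Real.sqrt (R - 1)) / 2)
    (e2 : R * t₂ = (2 + t₁ + t₂) / 2 - Real.sqrt (R - 1) * (t₂ - t₁) / 2)
    (e3 : R = 1 + (t₁ + t₂) / 2)
    (nR1 : 1.5460 < R) (nR2 : R < 1.5462)
    (n11 : 0.2389 < t₁) (n12 : t₁ < 0.2390)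
    (n21 : 0.8532 < t₂) (n22 : t₂ < 0.8533)
    (u a b p : ℝ)
    (hu : u = Real.sqrt (R - 1))
    (ha : a = (1 - u) / (2 * R - 1 + u))
    (hb : b = (1 + u) / (2 * R - 1 + u))
    (hp : p = (1 - 1 / R) * (1 + t₁)) :
    (3 * t₁ + 5 + a + b * (t₁ + 2)) / (2 * t₁ + 4 + 2 * p) < R := by
  have hR0 : (0:ℝ) < R := by linarith
  have hu0 : 0 ≤ u := hu ▸ Real.sqrt_nonneg _
  have hu2 : u ^ 2 = R - 1 := by
    rw [hu, sq, Real.mul_self_sqrt (by linarith)]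
  have hul : 0.7389 < u := by nlinarith
  have huu : u < 0.7391 := by nlinarith
  have hD : (0:ℝ) < 2 * R - 1 + u := by linarith
  have ha1 : a < 0.093 := by
    rw [ha, div_lt_iff₀ hD]; nlinarith
  have ha0 : 0 < a := by
    rw [ha]; exact div_pos (by linarith) hD
  have hb1 : b < 0.615 := by
    rw [hb, div_lt_iff₀ hD]; nlinarith
  have hb0 : 0 < b := by
    rw [hb]; exact div_pos (by linarith) hD
  have hpR : p * R = (R - 1) * (1 + t₁) := by
    rw [hp]; field_simp
  have hprodl : (0.67644 : ℝ) < (R - 1) * (1 + t₁) := by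
    have h1 := mul_lt_mul (show (0.546:ℝ) < R - 1 by linarith)
      (show (1.2389:ℝ) ≤ 1 + t₁ by linarith) (by norm_num) (by linarith)
    norm_num at h1; linarith
  have hprodu : (R - 1) * (1 + t₁) < 0.677 := by
    have h1 := mul_lt_mul (show R - 1 < (0.5462:ℝ) by linarith)
      (show 1 + t₁ ≤ (1.239:ℝ) by linarith) (by linarith) (by norm_num)
    norm_num at h1; linarith
  have hp0 : 0.43 < p := by
    by_contra h
    push_neg at h
    have := mul_le_mul_of_nonneg_right h hR0.le
    linarith
  have hp1 : p < 0.44 := by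
    by_contra h
    push_neg at h
    have := mul_le_mul_of_nonneg_right h hR0.le
    linarith
  have hDen : (0:ℝ) < 2 * t₁ + 4 + 2 * p := by linarith
  rw [div_lt_iff₀ hDen]
  have hbt : b * (t₁ + 2) < 1.378 := by nlinarith
  have hRD : (1.546 : ℝ) * (2 * t₁ + 4 + 2 * p) < R * (2 * t₁ + 4 + 2 * p) := by
    have := mul_pos (sub_pos.mpr nR1) hDen
    nlinarith [this]
  linarith
end

section
/- Let R, t₁, t₂ be real numbers satisfying the two-machine delay system together with its numeric localization 1.5460 < R < 1.5462, 0.2389 < t₁ < 0.2390, 0.8532 < t₂ < 0.8533. Then R·t₁ + (R−1)·(3/10) < (3/10)/(R−1). Consequently, for every real t' with 0 < t' ≤ R·t₁ + (R−1)·(3/10) one has 1 + (3/10)/t' > R. -/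
theorem stmt_18 (R t₁ t₂ : ℝ)
    (hR : 1 < R) (hR2 : R < 2) (h0 : 0 < t₁) (h12 : t₁ < t₂) (h21 : t₂ < 1)
    (e1 : R * t₁ = t₁ + (1 - Real.sqrt (R - 1)) / 2)
    (e2 : R * t₂ = (2 + t₁ + t₂) / 2 - Real.sqrt (R - 1) * (t₂ - t₁) / 2)
    (e3 : R = 1 + (t₁ + t₂) / 2)
    (nR1 : 1.5460 < R) (nR2 : R < 1.5462)
    (n11 : 0.2389 < t₁) (n12 : t₁ < 0.2390)
    (n21 : 0.8532 < t₂) (n22 : t₂ < 0.8533) :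
    R * t₁ + (R - 1) * (3 / 10) < (3 / 10) / (R - 1) ∧
    (∀ t' : ℝ, 0 < t' → t' ≤ R * t₁ + (R - 1) * (3 / 10) →
      R < 1 + (3 / 10) / t') := by
  have hpos : 0 < R - 1 := by linarith
  have key : (R * t₁ + (R - 1) * (3 / 10)) * (R - 1) < 3 / 10 := by
    have hm : R * t₁ < 1.5462 * 0.2390 := by nlinarith
    nlinarith [mul_lt_mul_of_pos_right hm hpos]
  have main : R * t₁ + (R - 1) * (3 / 10) < (3 / 10) / (R - 1) :=
    (lt_div_iff₀ hpos).mpr key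
  refine ⟨main, fun t' ht' hle => ?_⟩
  have h1 : t' * (R - 1) < 3 / 10 := by nlinarith
  have : R - 1 < (3 / 10) / t' := (lt_div_iff₀ ht').mpr (by linarith [mul_comm t' (R - 1)])
  linarith
end
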